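/- Let K be a field of characteristic zero and let R = K[x, y_1,…,y_n]. Fix 1 ≤ k ≤ n and let D = ∂_x + Σ_{i=1}^{k} (a(x)·y_i + b_i(x))·∂_i + Σ_{j=k+1}^{n} b_j(x)·∂_j be the K-derivation of R with a(x), b_1(x),…,b_n(x) ∈ K[x]. Then Im D = D(R) is a Mathieu–Zhao space of R if and only if a(x) is a constant, i.e., a(x) ∈ K. -/

import Mathlib

/-!
Since `D x = 1`, the image of `D` contains `1`, and a Mathieu–Zhao space containing `1` is the
whole ring; so the claim is that `D` is surjective exactly when `a` is constant.

Regard `K[x, y]` as polynomials in `y` over `K[x]`. On `f(x) y^β`, `D` acts as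
`f ↦ f' + s(β) a f` on the `y^β`-coefficient, where `s(β) = ∑_{i < k} βᵢ`, plus terms
`βᵢ bᵢ f y^(β - eᵢ)` of lower `y`-degree. If `a = c` is constant, `f' + s c f = g` is solvable in
`K[x]` for every `g`, and induction on the `y`-degree shows that `D` is onto.

If `deg a ≥ 1`, then `f' + s a f` is non-constant whenever `s ≠ 0` and `f ≠ 0`. Suppose
`D p = y₁` and let `γ` maximise `|γ|` among `e₁` and the `y`-exponents of `p` with `s(γ) ≠ 0`.
Nothing above `γ` contributes, so the `y^γ`-coefficient of `D p` is `f' + s(γ) a f` with `f` the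
`y^γ`-coefficient of `p`; as it is a constant, `f = 0`. So that coefficient of `D p` vanishes,
hence `γ ≠ e₁`, and `γ` is an exponent of `p` with `f = 0`, which is absurd.
-/

open MvPolynomial

/-- A `K`-subspace `M` of `R` is a Mathieu–Zhao space if for all `a, b ∈ R` such that
`a ^ m ∈ M` for all `m ≥ 1`, there exists `N` such that `b * a ^ m ∈ M` for all `m ≥ N`. -/
def IsMathieuZhao (K : Type*) {R : Type*} [Field K] [CommRing R] [Algebra K R]
    (M : Submodule K R) : Prop :=
  ∀ a b : R, (∀ m : ℕ, 1 ≤ m → a ^ m ∈ M) →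
    ∃ N : ℕ, ∀ m : ℕ, N ≤ m → b * a ^ m ∈ M

/-- A `K`-derivation `D` of `R` is simple if the only ideals `I` of `R` with `D(I) ⊆ I`
are `0` and `R`. -/
def Derivation.IsSimple {K R : Type*} [CommRing K] [CommRing R] [Algebra K R]
    (D : Derivation K R R) : Prop :=
  ∀ I : Ideal R, (∀ a ∈ I, D a ∈ I) → I = ⊥ ∨ I = ⊤

section IsMathieuZhao
variable {K R : Type*} [Field K] [CommRing R] [Algebra K R]

theorem IsMathieuZhao.eq_top_of_one_mem {M : Submodule K R} (hM : IsMathieuZhao K M)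
    (h1 : (1 : R) ∈ M) : M = ⊤ := by
  refine Submodule.eq_top_iff'.mpr fun b => ?_
  obtain ⟨N, hN⟩ := hM 1 b fun m _ => by rwa [one_pow]
  simpa using hN N le_rfl

theorem isMathieuZhao_top : IsMathieuZhao K (⊤ : Submodule K R) :=
  fun _ _ _ => ⟨0, fun _ _ => Submodule.mem_top⟩

end IsMathieuZhao

namespace Polynomial
variable {K : Type*} [Field K]

theorem exists_derivative_eq [CharZero K] (f : K[X]) : ∃ g, derivative g = f := by
  induction f using Polynomial.induction_on' with
  | add f₁ f₂ h₁ h₂ =>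
    obtain ⟨g₁, rfl⟩ := h₁
    obtain ⟨g₂, rfl⟩ := h₂
    exact ⟨g₁ + g₂, derivative_add⟩
  | monomial m c =>
    refine ⟨monomial (m + 1) (c / (m + 1)), ?_⟩
    rw [derivative_monomial, Nat.add_sub_cancel, Nat.cast_add_one,
      div_mul_cancel₀ _ (Nat.cast_add_one_ne_zero m)]

theorem exists_derivative_add_C_mul_eq_of_ne_zero {κ : K} (hκ : κ ≠ 0) (f : K[X]) :
    ∃ g, derivative g + C κ * g = f := by
  obtain ⟨m, hm⟩ : ∃ m, derivative^[m] f = 0 :=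
    ⟨_, iterate_derivative_eq_zero f.natDegree.lt_succ_self⟩
  induction m generalizing f with
  | zero => exact ⟨0, by simpa using hm.symm⟩
  | succ m ih =>
    obtain ⟨h, hh⟩ := ih (derivative f) hm
    refine ⟨C κ⁻¹ * (f - h), ?_⟩
    rw [derivative_C_mul, derivative_sub, ← hh]
    have : C κ * C κ⁻¹ = 1 := by rw [← C_mul, mul_inv_cancel₀ hκ, C_1]
    linear_combination f * this

theorem exists_derivative_add_C_mul_eq [CharZero K] (κ : K) (f : K[X]) :
    ∃ g, derivative g + C κ * g = f := by
  rcases eq_or_ne κ 0 with rfl | hκ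
  · simpa using exists_derivative_eq f
  · exact exists_derivative_add_C_mul_eq_of_ne_zero hκ f

theorem eq_zero_of_derivative_add_mul_eq_C {a f : K[X]} {c : K} (ha : a.natDegree ≠ 0)
    (h : derivative f + a * f = C c) : f = 0 := by
  by_contra hf
  have ha0 : a ≠ 0 := by rintro rfl; simp at ha
  have hlt : (derivative f).natDegree < (a * f).natDegree := by
    rw [natDegree_mul ha0 hf]
    have := natDegree_derivative_le f
    omega
  have := congrArg natDegree h
  rw [natDegree_add_eq_right_of_natDegree_lt hlt, natDegree_C, natDegree_mul ha0 hf] at this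
  omega

end Polynomial

namespace MvPolynomial
variable {R σ : Type*} [CommSemiring R]

theorem derivation_eq_sum_pderiv [Fintype σ]
    (D : Derivation R (MvPolynomial σ R) (MvPolynomial σ R)) (p : MvPolynomial σ R) :
    D p = ∑ v, D (X v) * pderiv v p := by
  classical
  have hsum : ∀ q, (∑ v, D (X v) • pderiv v) q = ∑ v, D (X v) * pderiv v q := fun q => by
    rw [← Derivation.coeFnAddMonoidHom_apply, map_sum, Finset.sum_apply]
    simp [Derivation.smul_apply]
  have : D = ∑ v, D (X v) • pderiv v := derivation_ext fun w => by simp [hsum, Pi.single_apply]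
  conv_lhs => rw [this]
  exact hsum p

theorem coeff_X_mul_pderiv (i : σ) (m : σ →₀ ℕ) (p : MvPolynomial σ R) :
    coeff m (X i * pderiv i p) = m i * coeff m p := by
  classical
  induction p using MvPolynomial.induction_on' with
  | add p q hp hq => simp only [map_add, mul_add, coeff_add, hp, hq]
  | monomial n r =>
    rw [X_mul_pderiv_monomial, coeff_smul, coeff_monomial]
    split_ifs with h <;> simp [h, nsmul_eq_mul]

theorem optionEquivRight_monomial (m : Option σ →₀ ℕ) (r : R) :
    optionEquivRight R σ (monomial m r) = monomial m.some (Polynomial.monomial (m none) r) := by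
  rw [optionEquivRight_apply, aeval_monomial, Finsupp.prod_option_index]
  · simp [MvPolynomial.monomial_eq, ← Polynomial.C_mul_X_pow_eq_monomial, mul_assoc]
  · simp
  · intros; rw [pow_add]

theorem optionEquivRight_aeval_X_none (f : Polynomial R) :
    optionEquivRight R σ (Polynomial.aeval (X none) f) = C f := by
  rw [← Polynomial.aeval_algHom_apply, optionEquivRight_X_none, ← algebraMap_eq,
    Polynomial.aeval_algebraMap_apply, Polynomial.aeval_X_left_apply]

theorem pderiv_optionEquivRight (i : σ) (p : MvPolynomial (Option σ) R) :
    pderiv i (optionEquivRight R σ p) = optionEquivRight R σ (pderiv (some i) p) := by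
  classical
  induction p using MvPolynomial.induction_on' with
  | add p q hp hq => simp only [map_add, hp, hq]
  | monomial m r =>
    have : (m - Finsupp.single (some i) 1).some = m.some - Finsupp.single i 1 := by
      ext j; simp [Finsupp.single_apply]
    rw [pderiv_monomial, optionEquivRight_monomial, optionEquivRight_monomial, pderiv_monomial,
      this, ← map_natCast Polynomial.C, Polynomial.monomial_mul_C]
    simp

theorem coeff_optionEquivRight_pderiv_none (γ : σ →₀ ℕ) (p : MvPolynomial (Option σ) R) :
    coeff γ (optionEquivRight R σ (pderiv none p)) =
      Polynomial.derivative (coeff γ (optionEquivRight R σ p)) := by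
  classical
  induction p using MvPolynomial.induction_on' with
  | add p q hp hq => simp only [map_add, coeff_add, hp, hq]
  | monomial m r =>
    have : (m - Finsupp.single none 1).some = m.some := by ext j; simp
    rw [pderiv_monomial, optionEquivRight_monomial, optionEquivRight_monomial, this,
      coeff_monomial, coeff_monomial]
    split_ifs <;> simp [Polynomial.derivative_monomial]

theorem optionEquivRight_derivation_apply [Fintype σ]
    (D : Derivation R (MvPolynomial (Option σ) R) (MvPolynomial (Option σ) R))
    (hD : D (X none) = 1) (p : MvPolynomial (Option σ) R) :
    optionEquivRight R σ (D p) = optionEquivRight R σ (pderiv none p) +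
      ∑ i, optionEquivRight R σ (D (X (some i))) * pderiv i (optionEquivRight R σ p) := by
  rw [derivation_eq_sum_pderiv D p, Fintype.sum_option, hD, one_mul, map_add, map_sum]
  simp only [map_mul, pderiv_optionEquivRight]

end MvPolynomial

open Polynomial (derivative)
open scoped Polynomial

section
variable {K : Type*} [Field K] {n : ℕ}

noncomputable def affineDerivation (k : ℕ) (a : K[X]) (b : Fin n → K[X]) :
    Derivation K (MvPolynomial (Option (Fin n)) K) (MvPolynomial (Option (Fin n)) K) :=
  mkDerivation K fun v => v.elim 1 fun i =>
    if (i : ℕ) < k then Polynomial.aeval (X none) a * X (some i) + Polynomial.aeval (X none) (b i)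
    else Polynomial.aeval (X none) (b i)

/-- The eigenvalue of the Euler operator `∑_{i < k} yᵢ ∂ᵢ` on the monomial `y^β`. -/
noncomputable def eulerWeight (k : ℕ) : (Fin n →₀ ℕ) →+ ℕ :=
  Finsupp.weight fun i : Fin n => if (i : ℕ) < k then 1 else 0

theorem eulerWeight_mul_eq_sum (k : ℕ) (β : Fin n →₀ ℕ) (f : K[X]) :
    eulerWeight k β * f = ∑ i : Fin n, if (i : ℕ) < k then (β i : K[X]) * f else 0 := by
  rw [eulerWeight, Finsupp.weight_apply, Finsupp.sum_fintype _ _ (by simp),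
    Nat.cast_sum, Finset.sum_mul]
  refine Finset.sum_congr rfl fun i _ => ?_
  split_ifs <;> simp

local notation "Φ" => optionEquivRight K (Fin n)

variable {k : ℕ} {a : K[X]} {b : Fin n → K[X]}

theorem optionEquivRight_affineDerivation (p : MvPolynomial (Option (Fin n)) K) :
    Φ (affineDerivation k a b p) = Φ (pderiv none p) +
      ∑ i : Fin n, ((if (i : ℕ) < k then C a * X i else 0) + C (b i)) * pderiv i (Φ p) := by
  rw [optionEquivRight_derivation_apply _ (mkDerivation_X _ _ _)]
  refine congrArg _ (Finset.sum_congr rfl fun i _ => ?_)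
  rw [affineDerivation, mkDerivation_X, Option.elim_some]
  split_ifs
  · rw [map_add, map_mul, optionEquivRight_aeval_X_none, optionEquivRight_aeval_X_none,
      optionEquivRight_X_some]
  · rw [optionEquivRight_aeval_X_none, zero_add]

theorem coeff_optionEquivRight_affineDerivation (p : MvPolynomial (Option (Fin n)) K)
    (γ : Fin n →₀ ℕ) :
    coeff γ (Φ (affineDerivation k a b p)) =
      derivative (coeff γ (Φ p)) + eulerWeight k γ * a * coeff γ (Φ p) +
        ∑ i, b i * coeff (γ + Finsupp.single i 1) (Φ p) * (γ i + 1) := by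
  have hterm : ∀ i : Fin n,
      coeff γ (((if (i : ℕ) < k then C a * X i else 0) + C (b i)) * pderiv i (Φ p)) =
        (if (i : ℕ) < k then (γ i : K[X]) * (a * coeff γ (Φ p)) else 0) +
          b i * coeff (γ + Finsupp.single i 1) (Φ p) * (γ i + 1) := fun i => by
    rw [add_mul, coeff_add, coeff_C_mul, coeff_pderiv, mul_assoc (b i)]
    split_ifs
    · rw [mul_assoc, coeff_C_mul, coeff_X_mul_pderiv]
      ring
    · rw [zero_mul, coeff_zero]
  rw [optionEquivRight_affineDerivation, coeff_add, coeff_optionEquivRight_pderiv_none, coeff_sum,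
    Finset.sum_congr rfl fun i _ => hterm i, Finset.sum_add_distrib, ← eulerWeight_mul_eq_sum,
    add_assoc, mul_assoc]

theorem optionEquivRight_affineDerivation_symm_monomial (β : Fin n →₀ ℕ) (g : K[X]) :
    Φ (affineDerivation k a b ((Φ).symm (monomial β g))) =
      monomial β (derivative g + eulerWeight k β * a * g) +
        ∑ i, monomial (β - Finsupp.single i 1) (b i * g * β i) := by
  have hx : Φ (pderiv none ((Φ).symm (monomial β g))) = monomial β (derivative g) := by
    ext γ
    rw [coeff_optionEquivRight_pderiv_none, AlgEquiv.apply_symm_apply, coeff_monomial,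
      coeff_monomial]
    split_ifs <;> simp
  have hy : ∀ i : Fin n,
      ((if (i : ℕ) < k then C a * X i else 0) + C (b i)) * pderiv i (monomial β g) =
        monomial β (if (i : ℕ) < k then (β i : K[X]) * (a * g) else 0) +
          monomial (β - Finsupp.single i 1) (b i * g * β i) := fun i => by
    split_ifs
    · rw [add_mul, mul_assoc, X_mul_pderiv_monomial, pderiv_monomial, smul_monomial,
        C_mul_monomial, C_mul_monomial, nsmul_eq_mul]
      ring_nf
    · rw [zero_add, monomial_zero, zero_add, pderiv_monomial, C_mul_monomial, mul_assoc]
  rw [optionEquivRight_affineDerivation, AlgEquiv.apply_symm_apply, hx,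
    Finset.sum_congr rfl fun i _ => hy i, Finset.sum_add_distrib, ← map_sum,
    ← eulerWeight_mul_eq_sum, ← add_assoc, ← map_add, mul_assoc]

theorem symm_monomial_mem_range_affineDerivation [CharZero K] (c : K) (β : Fin n →₀ ℕ)
    (g : K[X]) :
    (Φ).symm (monomial β g) ∈
      LinearMap.range (affineDerivation k (Polynomial.C c) b).toLinearMap := by
  set M := LinearMap.range (affineDerivation k (Polynomial.C c) b).toLinearMap
  induction hd : β.degree using Nat.strong_induction_on generalizing β g with | _ d ih => ?_
  obtain ⟨h, hh⟩ := Polynomial.exists_derivative_add_C_mul_eq (eulerWeight k β * c) g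
  have hlow : ∀ i, (Φ).symm (monomial (β - Finsupp.single i 1) (b i * h * β i)) ∈ M := by
    intro i
    by_cases hi : β i = 0
    · simp [hi]
    refine ih _ ?_ _ _ rfl
    have : β - Finsupp.single i 1 + Finsupp.single i 1 = β :=
      tsub_add_cancel_of_le (Finsupp.single_le_iff.mpr (Nat.one_le_iff_ne_zero.mpr hi))
    rw [← hd]
    conv_rhs => rw [← this]
    simp
  have hβ : (Φ).symm (monomial β g) =
      affineDerivation k (Polynomial.C c) b ((Φ).symm (monomial β h)) -
        ∑ i, (Φ).symm (monomial (β - Finsupp.single i 1) (b i * h * β i)) := by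
    rw [← map_sum, eq_sub_iff_add_eq, ← map_add, AlgEquiv.symm_apply_eq,
      optionEquivRight_affineDerivation_symm_monomial, ← hh, map_mul, map_natCast, mul_assoc]
  rw [hβ]
  exact M.sub_mem ⟨_, rfl⟩ (M.sum_mem fun i _ => hlow i)

theorem range_affineDerivation_eq_top [CharZero K] (c : K) :
    LinearMap.range (affineDerivation k (Polynomial.C c) b).toLinearMap = ⊤ := by
  refine eq_top_iff.mpr fun p _ => ?_
  rw [← (Φ).symm_apply_apply p, (Φ p).as_sum, map_sum]
  exact Submodule.sum_mem _ fun β _ => symm_monomial_mem_range_affineDerivation c β _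

theorem coeff_optionEquivRight_eq_zero_of_affineDerivation [CharZero K] (ha : a.natDegree ≠ 0)
    {p : MvPolynomial (Option (Fin n)) K} {γ : Fin n →₀ ℕ} (hγ : eulerWeight k γ ≠ 0)
    (hup : ∀ i, coeff (γ + Finsupp.single i 1) (Φ p) = 0) {c : K}
    (hc : coeff γ (Φ (affineDerivation k a b p)) = Polynomial.C c) :
    coeff γ (Φ p) = 0 := by
  refine Polynomial.eq_zero_of_derivative_add_mul_eq_C (a := (eulerWeight k γ : K[X]) * a) (c := c)
    ?_ ?_
  · rwa [← Polynomial.C_eq_natCast, Polynomial.natDegree_C_mul (Nat.cast_ne_zero.mpr hγ)]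
  · rw [← hc, coeff_optionEquivRight_affineDerivation,
      Finset.sum_eq_zero fun i _ => by rw [hup, mul_zero, zero_mul], add_zero, mul_assoc]

theorem X_some_notMem_range_affineDerivation [CharZero K] (ha : a.natDegree ≠ 0) {i₀ : Fin n}
    (hi₀ : (i₀ : ℕ) < k) :
    X (some i₀) ∉ LinearMap.range (affineDerivation k a b).toLinearMap := by
  classical
  rintro ⟨p, hp⟩
  set T := insert (Finsupp.single i₀ 1) ((Φ p).support.filter fun γ => eulerWeight k γ ≠ 0)
  obtain ⟨γ, hγT, hmax⟩ := T.exists_max_image Finsupp.degree (Finset.insert_nonempty _ _)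
  have hγ : eulerWeight k γ ≠ 0 := by
    rcases Finset.mem_insert.mp hγT with rfl | hγ
    · simp [eulerWeight, Finsupp.weight_single, hi₀]
    · exact (Finset.mem_filter.mp hγ).2
  have hup : ∀ i, coeff (γ + Finsupp.single i 1) (Φ p) = 0 := by
    intro i
    by_contra h
    have hmem : γ + Finsupp.single i 1 ∈ T := Finset.mem_insert_of_mem <|
      Finset.mem_filter.mpr ⟨mem_support_iff.mpr h, by rw [map_add]; omega⟩
    have := hmax _ hmem
    rw [map_add, Finsupp.degree_single] at this
    omega
  have hDp : coeff γ (Φ (affineDerivation k a b p)) =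
      Polynomial.C (if Finsupp.single i₀ 1 = γ then 1 else 0) := by
    rw [show affineDerivation k a b p = X (some i₀) from hp, optionEquivRight_X_some, coeff_X,
      apply_ite Polynomial.C, Polynomial.C_1, Polynomial.C_0]
  have hzero := coeff_optionEquivRight_eq_zero_of_affineDerivation ha hγ hup hDp
  have hne : Finsupp.single i₀ 1 ≠ γ := by
    intro h
    rw [coeff_optionEquivRight_affineDerivation, hzero,
      Finset.sum_eq_zero fun i _ => by rw [hup, mul_zero, zero_mul], if_pos h] at hDp
    simp at hDp
  exact mem_support_iff.mp
    (Finset.mem_filter.mp ((Finset.mem_insert.mp hγT).resolve_left hne.symm)).1 hzero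

end

/-- For `D = ∂ₓ + Σ_{i=1}^{k} (a(x) yᵢ + bᵢ(x)) ∂ᵢ + Σ_{j=k+1}^{n} bⱼ(x) ∂ⱼ`,
`Im D` is a Mathieu–Zhao space of `K[x, y₁, …, yₙ]` iff `a(x)` is a constant. -/
theorem statement3 (K : Type*) [Field K] [CharZero K]
    (n k : ℕ) (hk1 : 1 ≤ k) (hkn : k ≤ n)
    (a : Polynomial K) (b : Fin n → Polynomial K)
    (D : Derivation K (MvPolynomial (Option (Fin n)) K) (MvPolynomial (Option (Fin n)) K))
    (hDx : D (X none) = 1)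
    (hDy : ∀ i : Fin n, D (X (some i)) =
      if (i : ℕ) < k then
        Polynomial.aeval (X none) a * X (some i) + Polynomial.aeval (X none) (b i)
      else Polynomial.aeval (X none) (b i)) :
    IsMathieuZhao K (LinearMap.range D.toLinearMap) ↔ ∃ c : K, a = Polynomial.C c := by
  have h1 : (1 : MvPolynomial (Option (Fin n)) K) ∈ LinearMap.range D.toLinearMap := ⟨X none, hDx⟩
  obtain rfl : D = affineDerivation k a b := derivation_ext fun v => by
    cases v with
    | none => rw [hDx, affineDerivation, mkDerivation_X, Option.elim_none]
    | some i => rw [hDy, affineDerivation, mkDerivation_X, Option.elim_some]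
  constructor
  · intro hMZ
    by_contra hconst
    have ha : a.natDegree ≠ 0 := fun h =>
      hconst (Polynomial.natDegree_eq_zero.mp h |>.imp fun _ => Eq.symm)
    exact X_some_notMem_range_affineDerivation ha (i₀ := ⟨0, by omega⟩) hk1
      (hMZ.eq_top_of_one_mem h1 ▸ Submodule.mem_top)
  · rintro ⟨c, rfl⟩
    rw [range_affineDerivation_eq_top]
    exact isMathieuZhao_top
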